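/- arXiv:2005.04371 — 2 statements merged into one kernel-verified Lean document; each statement's English description precedes it below -/
import Mathlib

section
/- Let x ∈ (0,1) be irrational. For every integer k ≥ 1 and every integer j with 0 ≤ j < a_{2k+1}(x), setting N = a_1(x) + a_3(x) + ⋯ + a_{2k−1}(x) + j, the denominator of the N-th negative continued fraction convergent satisfies Q_N(x) = q_{2k−1}(x) + (j+1) · q_{2k}(x). -/
open MeasureTheory Filter Real

/-- The Gauss map `G(y) = 1/y - ⌊1/y⌋` (with `G 0 = 0`). -/
noncomputable def gaussMap (y : ℝ) : ℝ := Int.fract (1 / y)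

/-- The `n`-th regular continued fraction digit `a_n(x) = ⌊1 / G^{n-1}(x)⌋`. -/
noncomputable def rcfDigit (x : ℝ) (n : ℕ) : ℕ := (⌊1 / gaussMap^[n - 1] x⌋).toNat

/-- The negative continued fraction map `T(y) = -1/y - ⌊-1/y⌋` (with `T 0 = 0`). -/
noncomputable def negT (y : ℝ) : ℝ := Int.fract (-1 / y)

/-- The `n`-th negative continued fraction digit `a'_n(x) = ⌈1 / T^{n-1}(1-x)⌉`. -/
noncomputable def negDigit (x : ℝ) (n : ℕ) : ℕ := (⌈1 / negT^[n - 1] (1 - x)⌉).toNat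

/-- Numerators of negative continued fraction convergents, shifted so that
`negP x (n+1) = P_n` with `P_{-1} = negP x 0 = 1`, `P_0 = negP x 1 = 1`,
`P_n = a'_n P_{n-1} - P_{n-2}`. -/
noncomputable def negP (x : ℝ) : ℕ → ℤ
  | 0 => 1
  | 1 => 1
  | n + 2 => negDigit x (n + 1) * negP x (n + 1) - negP x n

/-- Denominators of negative continued fraction convergents, shifted so that
`negQ x (n+1) = Q_n` with `Q_{-1} = negQ x 0 = 0`, `Q_0 = negQ x 1 = 1`,
`Q_n = a'_n Q_{n-1} - Q_{n-2}`. -/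
noncomputable def negQ (x : ℝ) : ℕ → ℤ
  | 0 => 0
  | 1 => 1
  | n + 2 => negDigit x (n + 1) * negQ x (n + 1) - negQ x n

/-- Denominators of regular continued fraction convergents, shifted so that
`regQ x (n+1) = q_n` with `q_{-1} = regQ x 0 = 0`, `q_0 = regQ x 1 = 1`,
`q_n = a_n q_{n-1} + q_{n-2}`. -/
noncomputable def regQ (x : ℝ) : ℕ → ℤ
  | 0 => 0
  | 1 => 1
  | n + 2 => rcfDigit x (n + 1) * regQ x (n + 1) + regQ x n

/-! Write `g m = G^[m] x`, so that `g m = 1 / (a_{m+1} + g (m+1))`. The identity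
`T (1 - 1/(1+s)) = 1 - fract (1/s)`, with negative digit `⌊1/s⌋ + 2`, shows that from
`1 - g (2k) = 1 - 1/(a_{2k+1} + g (2k+1))` the negative orbit runs through `a_{2k+1} - 1` digits
`2` and then one digit `a_{2k+2} + 2`, landing at `1 - g (2k+2)`. Along a run of digits `2` the
`Q_n` form an arithmetic progression, here with step `q_{2k}`, which reaches
`q_{2k+1} = q_{2k-1} + a_{2k+1} q_{2k}`; the closing digit `a_{2k+2} + 2` then turns the step
into `q_{2k+2} = a_{2k+2} q_{2k+1} + q_{2k}`. -/

open Set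

lemma Irrational.fract {r : ℝ} (h : Irrational r) : Irrational (Int.fract r) := by
  simpa only [Int.fract] using h.sub_intCast ⌊r⌋

lemma Irrational.fract_pos {r : ℝ} (h : Irrational r) : 0 < Int.fract r :=
  Int.fract_pos.2 (h.ne_int ⌊r⌋)

lemma Irrational.one_div {r : ℝ} (h : Irrational r) : Irrational (1 / r) := by
  simpa only [_root_.one_div] using h.inv

lemma irrational_gaussMap {y : ℝ} (h : Irrational y) : Irrational (gaussMap y) :=
  h.one_div.fract

lemma irrational_gaussMap_iterate {x : ℝ} (h : Irrational x) (m : ℕ) :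
    Irrational (gaussMap^[m] x) := by
  induction m with
  | zero => exact h
  | succ m ih => rw [Function.iterate_succ_apply']; exact irrational_gaussMap ih

lemma gaussMap_iterate_mem_Ioo {x : ℝ} (hx : x ∈ Ioo 0 1) (hirr : Irrational x) (m : ℕ) :
    gaussMap^[m] x ∈ Ioo 0 1 := by
  cases m with
  | zero => exact hx
  | succ m =>
    rw [Function.iterate_succ_apply']
    exact ⟨(irrational_gaussMap_iterate hirr m).one_div.fract_pos, Int.fract_lt_one _⟩

lemma rcfDigit_succ (x : ℝ) (m : ℕ) : rcfDigit x (m + 1) = ⌊1 / gaussMap^[m] x⌋₊ := by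
  rw [rcfDigit, Nat.add_sub_cancel, Int.floor_toNat]

lemma one_le_rcfDigit {x : ℝ} (hx : x ∈ Ioo 0 1) (hirr : Irrational x) (m : ℕ) :
    1 ≤ rcfDigit x (m + 1) := by
  have hm := gaussMap_iterate_mem_Ioo hx hirr m
  rw [rcfDigit_succ, Nat.one_le_floor_iff, one_le_div hm.1]
  exact hm.2.le

lemma gaussMap_iterate_eq_one_div {x : ℝ} {m : ℕ} (hm : 0 < gaussMap^[m] x) :
    gaussMap^[m] x = 1 / (rcfDigit x (m + 1) + gaussMap^[m + 1] x) := by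
  have hfloor : ((⌊1 / gaussMap^[m] x⌋₊ : ℤ) : ℝ) = ⌊1 / gaussMap^[m] x⌋ := by
    rw [Int.natCast_floor_eq_floor (by positivity)]
  rw [rcfDigit_succ, Function.iterate_succ_apply', gaussMap, ← Int.cast_natCast, hfloor,
    Int.floor_add_fract, one_div_one_div]

lemma one_sub_one_div_one_add {s : ℝ} (hs : 0 < s) : 1 - 1 / (1 + s) = s / (1 + s) := by
  have hs1 : 1 + s ≠ 0 := by positivity
  field_simp
  ring

lemma negT_one_sub_one_div_one_add {s : ℝ} (hs : 0 < s) (h : Irrational s) :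
    negT (1 - 1 / (1 + s)) = 1 - Int.fract (1 / s) := by
  have hs0 : s ≠ 0 := hs.ne'
  have hs1 : 1 + s ≠ 0 := by positivity
  have : -1 / (s / (1 + s)) = -(1 / s) + ((-1 : ℤ) : ℝ) := by
    rw [div_div_eq_mul_div]
    push_cast
    field_simp
    ring
  rw [negT, one_sub_one_div_one_add hs, this, Int.fract_add_intCast,
    Int.fract_neg h.one_div.fract_pos.ne']

lemma ceil_one_div_one_sub_one_div_one_add {s : ℝ} (hs : 0 < s) (h : Irrational s) :
    ⌈1 / (1 - 1 / (1 + s))⌉ = ⌊1 / s⌋ + 2 := by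
  have hs0 : s ≠ 0 := hs.ne'
  have : 1 / (s / (1 + s)) = 1 / s + ((1 : ℤ) : ℝ) := by
    rw [one_div_div]
    push_cast
    field_simp
  rw [one_sub_one_div_one_add hs, this, Int.ceil_add_intCast,
    (Int.ceil_eq_floor_add_one_iff_notMem _).2 fun ⟨m, hm⟩ => h.one_div.ne_int m hm.symm]
  ring

lemma negT_iterate_one_sub_one_div {y : ℝ} (hy : 0 < y) (h : Irrational y) (n i : ℕ) :
    negT^[i] (1 - 1 / (1 + ((n + i : ℕ) + y))) = 1 - 1 / (1 + (n + y)) := by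
  induction i with
  | zero => rfl
  | succ i ih =>
    have hs : ((n + (i + 1) : ℕ) : ℝ) + y = 1 + ((n + i : ℕ) + y) := by push_cast; ring
    have hirr : Irrational (1 + ((n + i : ℕ) + y)) := by
      simpa only [Nat.cast_one] using (h.natCast_add (n + i)).natCast_add 1
    have hlt : 1 / (1 + ((n + i : ℕ) + y)) < 1 := (div_lt_one (by positivity)).2 (by linarith)
    rw [Function.iterate_succ_apply, hs, negT_one_sub_one_div_one_add (by positivity) hirr,
      Int.fract_eq_self.2 ⟨by positivity, hlt⟩, ih]

lemma negT_iterate_succ_one_sub_one_div {y : ℝ} (hy : 0 < y) (h : Irrational y) (n : ℕ) :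
    negT^[n + 1] (1 - 1 / ((n + 1 : ℕ) + y)) = 1 - gaussMap y := by
  have hs : ((n + 1 : ℕ) : ℝ) + y = 1 + ((0 + n : ℕ) + y) := by push_cast; ring
  rw [Function.iterate_succ_apply', hs, negT_iterate_one_sub_one_div hy h, Nat.cast_zero, zero_add,
    negT_one_sub_one_div_one_add hy h, gaussMap]

noncomputable def oddDigitSum (x : ℝ) (k : ℕ) : ℕ :=
  ∑ i ∈ Finset.Icc 1 k, rcfDigit x (2 * i - 1)

lemma oddDigitSum_succ (x : ℝ) (k : ℕ) :
    oddDigitSum x (k + 1) = oddDigitSum x k + rcfDigit x (2 * k + 1) := by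
  rw [oddDigitSum, Finset.sum_Icc_succ_top (by omega)]
  rfl

section Orbit

variable {x : ℝ}

lemma negT_iterate_oddDigitSum (hx : x ∈ Ioo 0 1) (hirr : Irrational x) (k : ℕ) :
    negT^[oddDigitSum x k] (1 - x) = 1 - gaussMap^[2 * k] x := by
  induction k with
  | zero => rfl
  | succ k ih =>
    have hg := gaussMap_iterate_mem_Ioo hx hirr (2 * k + 1)
    obtain ⟨n, hn⟩ := Nat.exists_eq_add_of_le' (one_le_rcfDigit hx hirr (2 * k))
    rw [oddDigitSum_succ, add_comm, Function.iterate_add_apply, ih,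
      gaussMap_iterate_eq_one_div (gaussMap_iterate_mem_Ioo hx hirr (2 * k)).1, hn,
      negT_iterate_succ_one_sub_one_div hg.1 (irrational_gaussMap_iterate hirr _),
      ← Function.iterate_succ_apply' gaussMap]
    rfl

lemma negT_iterate_oddDigitSum_add (hx : x ∈ Ioo 0 1) (hirr : Irrational x) {k n i : ℕ}
    (h : n + i + 1 = rcfDigit x (2 * k + 1)) :
    negT^[oddDigitSum x k + i] (1 - x) = 1 - 1 / (1 + (n + gaussMap^[2 * k + 1] x)) := by
  have hg := gaussMap_iterate_mem_Ioo hx hirr (2 * k + 1)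
  have hs : ((rcfDigit x (2 * k + 1) : ℕ) : ℝ) + gaussMap^[2 * k + 1] x
      = 1 + ((n + i : ℕ) + gaussMap^[2 * k + 1] x) := by
    rw [← h]; push_cast; ring
  rw [add_comm, Function.iterate_add_apply, negT_iterate_oddDigitSum hx hirr,
    gaussMap_iterate_eq_one_div (gaussMap_iterate_mem_Ioo hx hirr (2 * k)).1, hs,
    negT_iterate_one_sub_one_div hg.1 (irrational_gaussMap_iterate hirr _)]

lemma negDigit_oddDigitSum_add (hx : x ∈ Ioo 0 1) (hirr : Irrational x) {k n i : ℕ}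
    (h : n + i + 1 = rcfDigit x (2 * k + 1)) :
    negDigit x (oddDigitSum x k + i + 1) = ⌊1 / (n + gaussMap^[2 * k + 1] x)⌋₊ + 2 := by
  have hg := gaussMap_iterate_mem_Ioo hx hirr (2 * k + 1)
  have hs : 0 < n + gaussMap^[2 * k + 1] x := add_pos_of_nonneg_of_pos n.cast_nonneg hg.1
  have hirr' : Irrational (n + gaussMap^[2 * k + 1] x) :=
    (irrational_gaussMap_iterate hirr _).natCast_add n
  have hfloor := Int.floor_nonneg.2 (one_div_pos.2 hs).le
  rw [negDigit, Nat.add_sub_cancel, negT_iterate_oddDigitSum_add hx hirr h,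
    ceil_one_div_one_sub_one_div_one_add hs hirr', ← Int.floor_toNat]
  omega

lemma negDigit_eq_two (hx : x ∈ Ioo 0 1) (hirr : Irrational x) {k i : ℕ}
    (hi : i + 1 < rcfDigit x (2 * k + 1)) : negDigit x (oddDigitSum x k + i + 1) = 2 := by
  obtain ⟨n, hn⟩ := Nat.exists_eq_add_of_lt hi
  have hg := gaussMap_iterate_mem_Ioo hx hirr (2 * k + 1)
  rw [negDigit_oddDigitSum_add hx hirr (n := n + 1) (by omega), Nat.floor_eq_zero.2]
  rw [div_lt_one (by push_cast; linarith [hg.1])]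
  push_cast
  linarith [hg.1]

lemma negDigit_oddDigitSum_succ (hx : x ∈ Ioo 0 1) (hirr : Irrational x) (k : ℕ) :
    negDigit x (oddDigitSum x (k + 1)) = rcfDigit x (2 * k + 2) + 2 := by
  obtain ⟨n, hn⟩ := Nat.exists_eq_add_of_le' (one_le_rcfDigit hx hirr (2 * k))
  rw [oddDigitSum_succ, hn, ← add_assoc, negDigit_oddDigitSum_add hx hirr (n := 0) (by omega),
    Nat.cast_zero, zero_add, rcfDigit_succ x (2 * k + 1)]

end Orbit

lemma negQ_add_two (x : ℝ) (n : ℕ) :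
    negQ x (n + 2) = negDigit x (n + 1) * negQ x (n + 1) - negQ x n := by
  rw [negQ]

lemma regQ_add_two (x : ℝ) (n : ℕ) :
    regQ x (n + 2) = rcfDigit x (n + 1) * regQ x (n + 1) + regQ x n := by
  rw [regQ]

section Denominators

variable {x : ℝ}

lemma negQ_succ_sub_of_negDigit_eq_two {m a : ℕ}
    (h : ∀ i, i + 1 < a → negDigit x (m + i + 1) = 2) {i : ℕ} (hi : i < a) :
    negQ x (m + i + 1) - negQ x (m + i) = negQ x (m + 1) - negQ x m := by
  induction i with
  | zero => rfl
  | succ i ih =>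
    rw [← ih (by omega), ← add_assoc, negQ_add_two, h i hi]
    push_cast
    ring

lemma negQ_add_of_negDigit_eq_two {m a : ℕ}
    (h : ∀ i, i + 1 < a → negDigit x (m + i + 1) = 2) {i : ℕ} (hi : i ≤ a) :
    negQ x (m + i) = negQ x m + i * (negQ x (m + 1) - negQ x m) := by
  induction i with
  | zero => simp
  | succ i ih =>
    rw [← add_assoc, ← sub_add_cancel (negQ x (m + i + 1)) (negQ x (m + i)),
      negQ_succ_sub_of_negDigit_eq_two h hi, ih (by omega)]
    push_cast
    ring

lemma negQ_oddDigitSum (hx : x ∈ Ioo 0 1) (hirr : Irrational x) (k : ℕ) :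
    negQ x (oddDigitSum x k) = regQ x (2 * k) ∧
      negQ x (oddDigitSum x k + 1) = regQ x (2 * k) + regQ x (2 * k + 1) := by
  induction k with
  | zero => exact ⟨rfl, rfl⟩
  | succ k ih =>
    obtain ⟨h0, h1⟩ := ih
    set m := oddDigitSum x k
    obtain ⟨n, hn⟩ := Nat.exists_eq_add_of_le' (one_le_rcfDigit hx hirr (2 * k))
    have hrun := fun i (hi : i ≤ rcfDigit x (2 * k + 1)) =>
      negQ_add_of_negDigit_eq_two (fun _ => negDigit_eq_two hx hirr) hi
    have hS : oddDigitSum x (k + 1) = m + n + 1 := by rw [oddDigitSum_succ, hn, add_assoc]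
    have hQn : negQ x (m + n) = regQ x (2 * k) + n * regQ x (2 * k + 1) := by
      rw [hrun n (by omega), h0, h1]
      ring
    have hR2 : regQ x (2 * k + 2) = regQ x (2 * k) + (n + 1) * regQ x (2 * k + 1) := by
      rw [regQ_add_two, hn]
      push_cast
      ring
    have hR3 : regQ x (2 * k + 2 + 1)
        = rcfDigit x (2 * k + 2) * regQ x (2 * k + 2) + regQ x (2 * k + 1) :=
      regQ_add_two x (2 * k + 1)
    have hQS : negQ x (m + n + 1) = regQ x (2 * k + 2) := by
      rw [add_assoc, hrun (n + 1) (by omega), h0, h1, hR2]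
      push_cast
      ring
    have hd := negDigit_oddDigitSum_succ hx hirr k
    rw [hS] at hd
    rw [hS, mul_add_one, hR3, negQ_add_two, hd, hQS, hQn, hR2]
    refine ⟨rfl, ?_⟩
    push_cast
    ring

end Denominators

theorem negQ_eq_regQ_combination_general (x : ℝ) (hx : x ∈ Set.Ioo (0 : ℝ) 1) (hirr : Irrational x)
    (k : ℕ) (j : ℕ) (hj : j < rcfDigit x (2 * k + 1)) :
    negQ x ((∑ i ∈ Finset.Icc 1 k, rcfDigit x (2 * i - 1)) + j + 1)
      = regQ x (2 * k) + (j + 1) * regQ x (2 * k + 1) := by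
  obtain ⟨h0, h1⟩ := negQ_oddDigitSum hx hirr k
  change negQ x (oddDigitSum x k + j + 1) = _
  rw [add_assoc, negQ_add_of_negDigit_eq_two (fun _ => negDigit_eq_two hx hirr) hj, h0, h1]
  push_cast
  ring

/-- With `N = a₁ + a₃ + ⋯ + a_{2k-1} + j` (`0 ≤ j < a_{2k+1}`), the negative
convergent denominator satisfies `Q_N = q_{2k-1} + (j+1) q_{2k}`. -/
theorem negQ_eq_regQ_combination (x : ℝ) (hx : x ∈ Set.Ioo (0 : ℝ) 1) (hirr : Irrational x)
    (k : ℕ) (hk : 1 ≤ k) (j : ℕ) (hj : j < rcfDigit x (2 * k + 1)) :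
    negQ x ((∑ i ∈ Finset.Icc 1 k, rcfDigit x (2 * i - 1)) + j + 1)
      = regQ x (2 * k) + (j + 1) * regQ x (2 * k + 1) :=
  negQ_eq_regQ_combination_general x hx hirr k j hj
end

section
/- Let x ∈ (0,1) be irrational with negative continued fraction convergents P_n/Q_n. Then for every n ≥ 1, 1/(Q_n Q_{n−1}) < |x − P_{n−1}/Q_{n−1}| < 1/(Q_{n−1}(Q_n − Q_{n−1})). -/
/-!
Write `y = T^[n] (1 - x) ∈ (0, 1)` for the tail of the expansion. The recurrences for `P` and `Q`
give `x (Q_{n} - Q_{n-1} y) = P_{n} - P_{n-1} y` (indices as in the paper), and together with the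
determinant identity `P_{n} Q_{n-1} - P_{n-1} Q_{n} = -1` this yields
`x - P_{n-1}/Q_{n-1} = -1 / (Q_{n-1} (Q_{n} - Q_{n-1} y))`. Both bounds follow from `0 < y < 1`
and `Q_{n-1} < Q_{n}`.
-/

open MeasureTheory Filter Real

theorem negT_eq_ceil_sub (y : ℝ) : negT y = ⌈1 / y⌉ - 1 / y := by
  rw [negT, Int.fract, neg_div, Int.floor_neg, Int.cast_neg]
  ring

theorem irrational_negT {y : ℝ} (h : Irrational y) : Irrational (negT y) := by
  rw [negT_eq_ceil_sub, one_div]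
  exact h.inv.intCast_sub _

theorem negT_mem_Ioo {y : ℝ} (h : Irrational y) : negT y ∈ Set.Ioo 0 1 :=
  ⟨Int.fract_pos.2 (by simpa [one_div, neg_div] using h.inv.neg.ne_int _), Int.fract_lt_one _⟩

theorem two_le_ceil_one_div {y : ℝ} (hy : y ∈ Set.Ioo 0 1) : 2 ≤ ⌈1 / y⌉ := by
  have : ((1 : ℤ) : ℝ) < 1 / y := by
    rw [Int.cast_one, lt_div_iff₀ hy.1]
    linarith [hy.2]
  have := Int.lt_ceil.2 this
  omega

theorem one_div_mul_sub_mem_Ioo {q q' y : ℝ} (hq : 0 < q) (hqq' : q < q')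
    (hy : y ∈ Set.Ioo 0 1) :
    1 / (q' * q) < 1 / (q * (q' - q * y)) ∧ 1 / (q * (q' - q * y)) < 1 / (q * (q' - q)) := by
  have hqy : 0 < q * y := mul_pos hq hy.1
  have hqy' : q * y < q := mul_lt_of_lt_one_right hq hy.2
  have hdiff : 0 < q' - q := sub_pos.2 hqq'
  constructor
  · rw [mul_comm q']
    exact one_div_lt_one_div_of_lt (mul_pos hq (by linarith))
      (mul_lt_mul_of_pos_left (by linarith) hq)
  · exact one_div_lt_one_div_of_lt (mul_pos hq hdiff) (mul_lt_mul_of_pos_left (by linarith) hq)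

section

variable {x : ℝ}

theorem negCF_determinant (n : ℕ) :
    negP x (n + 1) * negQ x n - negP x n * negQ x (n + 1) = -1 := by
  induction n with
  | zero => simp [negP, negQ]
  | succ n ih =>
    rw [negP, negQ]
    linear_combination ih

theorem irrational_negT_iterate (hirr : Irrational x) (n : ℕ) :
    Irrational (negT^[n] (1 - x)) := by
  induction n with
  | zero => simpa using hirr.intCast_sub 1
  | succ n ih =>
    rw [Function.iterate_succ_apply']
    exact irrational_negT ih

theorem negT_iterate_mem_Ioo (hx : x ∈ Set.Ioo (0 : ℝ) 1) (hirr : Irrational x) (n : ℕ) :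
    negT^[n] (1 - x) ∈ Set.Ioo 0 1 := by
  cases n with
  | zero => exact ⟨sub_pos.2 hx.2, sub_lt_self 1 hx.1⟩
  | succ n =>
    rw [Function.iterate_succ_apply']
    exact negT_mem_Ioo (irrational_negT_iterate hirr n)

theorem negDigit_succ (hx : x ∈ Set.Ioo (0 : ℝ) 1) (hirr : Irrational x) (n : ℕ) :
    (negDigit x (n + 1) : ℤ) = ⌈1 / negT^[n] (1 - x)⌉ := by
  have := two_le_ceil_one_div (negT_iterate_mem_Ioo hx hirr n)
  rw [negDigit, Nat.add_sub_cancel, Int.toNat_of_nonneg (by omega)]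

theorem negT_iterate_succ (hx : x ∈ Set.Ioo (0 : ℝ) 1) (hirr : Irrational x) (n : ℕ) :
    negT^[n + 1] (1 - x) = negDigit x (n + 1) - 1 / negT^[n] (1 - x) := by
  rw [Function.iterate_succ_apply', negT_eq_ceil_sub, ← negDigit_succ hx hirr, Int.cast_natCast]

theorem negQ_strictMono (hx : x ∈ Set.Ioo (0 : ℝ) 1) (hirr : Irrational x) :
    StrictMono (negQ x) := by
  have h : ∀ n, 0 ≤ negQ x n ∧ negQ x n < negQ x (n + 1) := by
    intro n
    induction n with
    | zero => simp [negQ]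
    | succ n ih =>
      have ha : 2 ≤ (negDigit x (n + 1) : ℤ) :=
        negDigit_succ hx hirr n ▸ two_le_ceil_one_div (negT_iterate_mem_Ioo hx hirr n)
      refine ⟨by linarith, ?_⟩
      rw [negQ]
      nlinarith
  exact strictMono_nat_of_lt_succ fun n => (h n).2

theorem negQ_pos (hx : x ∈ Set.Ioo (0 : ℝ) 1) (hirr : Irrational x) {n : ℕ} (hn : 1 ≤ n) :
    0 < negQ x n :=
  (negQ_strictMono hx hirr).lt_iff_lt.2 hn

theorem mul_negQ_sub_eq_negP_sub (hx : x ∈ Set.Ioo (0 : ℝ) 1) (hirr : Irrational x) (n : ℕ) :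
    x * (negQ x (n + 1) - negQ x n * negT^[n] (1 - x)) =
      negP x (n + 1) - negP x n * negT^[n] (1 - x) := by
  induction n with
  | zero => simp [negP, negQ]
  | succ n ih =>
    have hy : negT^[n] (1 - x) ≠ 0 := (negT_iterate_mem_Ioo hx hirr n).1.ne'
    rw [negT_iterate_succ hx hirr, negP, negQ]
    push_cast
    field_simp
    linear_combination ih

theorem sub_negP_div_negQ (hx : x ∈ Set.Ioo (0 : ℝ) 1) (hirr : Irrational x) {n : ℕ}
    (hn : 1 ≤ n) :
    x - negP x n / negQ x n =
      -1 / (negQ x n * (negQ x (n + 1) - negQ x n * negT^[n] (1 - x))) := by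
  have hQ : (0 : ℝ) < negQ x n := Int.cast_pos.2 (negQ_pos hx hirr hn)
  have hQQ' : (negQ x n : ℝ) < negQ x (n + 1) :=
    Int.cast_lt.2 (negQ_strictMono hx hirr n.lt_succ_self)
  have hd : (0 : ℝ) < negQ x (n + 1) - negQ x n * negT^[n] (1 - x) := by
    linarith [mul_lt_of_lt_one_right hQ (negT_iterate_mem_Ioo hx hirr n).2]
  have hdet : (negP x (n + 1) * negQ x n - negP x n * negQ x (n + 1) : ℝ) = -1 := by
    exact_mod_cast negCF_determinant n
  rw [eq_div_iff (mul_pos hQ hd).ne']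
  field_simp
  linear_combination negQ x n * mul_negQ_sub_eq_negP_sub hx hirr n + hdet

end

/-- Approximation quality of negative continued fraction convergents:
`1/(Qₙ Qₙ₋₁) < |x - Pₙ₋₁/Qₙ₋₁| < 1/(Qₙ₋₁ (Qₙ - Qₙ₋₁))` for all `n ≥ 1`.
(Recall `negP x n = P_{n-1}` and `negQ x n = Q_{n-1}` with the index shift.) -/
theorem negCF_approx_bounds (x : ℝ) (hx : x ∈ Set.Ioo (0 : ℝ) 1) (hirr : Irrational x)
    (n : ℕ) (hn : 1 ≤ n) :
    1 / ((negQ x (n + 1) : ℝ) * (negQ x n : ℝ)) < |x - (negP x n : ℝ) / (negQ x n : ℝ)| ∧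
    |x - (negP x n : ℝ) / (negQ x n : ℝ)| <
      1 / ((negQ x n : ℝ) * ((negQ x (n + 1) : ℝ) - (negQ x n : ℝ))) := by
  have hQ : (0 : ℝ) < negQ x n := Int.cast_pos.2 (negQ_pos hx hirr hn)
  have hQQ' : (negQ x n : ℝ) < negQ x (n + 1) :=
    Int.cast_lt.2 (negQ_strictMono hx hirr n.lt_succ_self)
  obtain ⟨hlower, hupper⟩ := one_div_mul_sub_mem_Ioo hQ hQQ' (negT_iterate_mem_Ioo hx hirr n)
  have hpos : (0 : ℝ) < 1 / (negQ x (n + 1) * negQ x n) :=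
    one_div_pos.2 (mul_pos (hQ.trans hQQ') hQ)
  rw [sub_negP_div_negQ hx hirr hn, neg_div, abs_neg, abs_of_pos (hpos.trans hlower)]
  exact ⟨hlower, hupper⟩
end
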